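/- In ZF with Turing determinacy (together with its consequence that every countable set of degrees has an upper bound), for every almost increasing function Φ : 𝒟 → 𝒟 there is no function f : 𝒟 → ℝ that is almost injective corresponding to Φ; that is, there is no upper cone on which f(y) ≠ f(Φ(y)) for all y in the cone. -/

import Mathlib

/-- Relativized partial recursiveness: `f` is partial recursive in the oracle `O`. -/
inductive RecursiveInOracle (O : ℕ →. ℕ) : (ℕ →. ℕ) → Prop
  | oracle : RecursiveInOracle O O
  | zero : RecursiveInOracle O (pure 0)
  | succ : RecursiveInOracle O Nat.succ
  | left : RecursiveInOracle O ↑fun n : ℕ => n.unpair.1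
  | right : RecursiveInOracle O ↑fun n : ℕ => n.unpair.2
  | pair {f g} : RecursiveInOracle O f → RecursiveInOracle O g →
      RecursiveInOracle O fun n => Nat.pair <$> f n <*> g n
  | comp {f g} : RecursiveInOracle O f → RecursiveInOracle O g →
      RecursiveInOracle O fun n => g n >>= f
  | prec {f g} : RecursiveInOracle O f → RecursiveInOracle O g →
      RecursiveInOracle O (Nat.unpaired fun a n =>
        n.rec (f a) fun y IH => do let i ← IH; g (Nat.pair a (Nat.pair y i)))
  | rfind {f} : RecursiveInOracle O f →
      RecursiveInOracle O fun a => Nat.rfind fun n => (fun m => m = 0) <$> f (Nat.pair a n)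

theorem RecursiveInOracle.trans' {O O' f : ℕ →. ℕ}
    (hf : RecursiveInOracle O f) (hO : RecursiveInOracle O' O) : RecursiveInOracle O' f := by
  induction hf with
  | oracle => exact hO
  | zero => exact .zero
  | succ => exact .succ
  | left => exact .left
  | right => exact .right
  | pair _ _ ih₁ ih₂ => exact .pair ih₁ ih₂
  | comp _ _ ih₁ ih₂ => exact .comp ih₁ ih₂
  | prec _ _ ih₁ ih₂ => exact .prec ih₁ ih₂
  | rfind _ ih => exact .rfind ih

/-- Reals are identified with elements of Cantor space `2^ω`. -/
abbrev TReal : Type := ℕ → Bool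

/-- The characteristic (total) function of a real, as a partial function on `ℕ`. -/
def charFn (x : TReal) : ℕ →. ℕ := fun n => Part.some (cond (x n) 1 0)

/-- Turing reducibility `x ≤ᵀ y` between reals. -/
def TuringLE (x y : TReal) : Prop := RecursiveInOracle (charFn y) (charFn x)

theorem TuringLE.refl (x : TReal) : TuringLE x x := RecursiveInOracle.oracle

theorem TuringLE.trans {x y z : TReal} (h₁ : TuringLE x y) (h₂ : TuringLE y z) :
    TuringLE x z := RecursiveInOracle.trans' h₁ h₂

/-- Turing equivalence of reals. -/
def TuringEquiv (x y : TReal) : Prop := TuringLE x y ∧ TuringLE y x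

instance turingSetoid : Setoid TReal :=
  ⟨TuringEquiv, fun x => ⟨TuringLE.refl x, TuringLE.refl x⟩, fun h => ⟨h.2, h.1⟩,
    fun h₁ h₂ => ⟨h₁.1.trans h₂.1, h₂.2.trans h₁.2⟩⟩

/-- The Turing degrees. -/
def TuringDegreeR : Type := Quotient turingSetoid

/-- The Turing degree of a real. -/
def deg (x : TReal) : TuringDegreeR := Quotient.mk _ x

instance : PartialOrder TuringDegreeR where
  le := Quotient.lift₂ TuringLE (by
    rintro a b a' b' ⟨hab, hba⟩ ⟨hcd, hdc⟩
    exact propext ⟨fun h => (hba.trans h).trans hcd, fun h => (hab.trans h).trans hdc⟩)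
  le_refl := fun d => Quotient.inductionOn d TuringLE.refl
  le_trans := fun a b c => Quotient.inductionOn₃ a b c fun _ _ _ h₁ h₂ => TuringLE.trans h₁ h₂
  le_antisymm := fun a b => Quotient.inductionOn₂ a b fun _ _ h₁ h₂ => Quotient.sound ⟨h₁, h₂⟩

/-- The upper cone of Turing degrees above `x`. -/
def upperCone (x : TuringDegreeR) : Set TuringDegreeR := {y | x ≤ y}

/-- Turing determinacy: every set of Turing degrees contains or is disjoint from
an upper cone. -/
def TD : Prop :=
  ∀ A : Set TuringDegreeR, (∃ x, upperCone x ⊆ A) ∨ (∃ x, upperCone x ⊆ Aᶜ)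

/-- The countable choice axiom for sets of reals. -/
def CCR : Prop :=
  ∀ A : ℕ → Set TReal, (∀ n, (A n).Nonempty) → ∃ f : ℕ → TReal, ∀ n, f n ∈ A n

/-- `Φ : 𝒟 → 𝒟` is almost increasing if `y < Φ y` on some upper cone. -/
def AlmostIncreasing (Φ : TuringDegreeR → TuringDegreeR) : Prop :=
  ∃ x : TuringDegreeR, ∀ y, x ≤ y → y < Φ y

/-- `f : 𝒟 → ℝ` is almost injective corresponding to `Φ` if `f y ≠ f (Φ y)` on some upper cone. -/
def AlmostInjective (Φ : TuringDegreeR → TuringDegreeR) (f : TuringDegreeR → TReal) : Prop :=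
  ∃ x : TuringDegreeR, ∀ y, x ≤ y → f y ≠ f (Φ y)


/-!
By Turing determinacy each bit of `f` is constant on an upper cone. The countably many cones
have a common upper bound (the join of representatives), above which `f` is constant. A degree
`d` above this bound and inside the cones of the hypotheses satisfies `d < Φ d`, so `Φ d` is
above the bound as well and `f d = f (Φ d)`.
-/

namespace RecursiveInOracle

variable {O : ℕ →. ℕ}

lemma id : RecursiveInOracle O (fun n : ℕ => Part.some n) := by
  have h : (fun n : ℕ => Part.some n) =
      fun n => Nat.pair <$> (↑fun n : ℕ => n.unpair.1 : ℕ →. ℕ) n <*>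
        (↑fun n : ℕ => n.unpair.2 : ℕ →. ℕ) n := by
    funext n
    simp [Seq.seq, Nat.pair_unpair]
  rw [h]
  exact .pair .left .right

lemma const (c : ℕ) : RecursiveInOracle O (fun _ : ℕ => Part.some c) := by
  induction c with
  | zero => exact .zero
  | succ c ih =>
    have h : (fun _ : ℕ => Part.some (c + 1)) =
        fun n : ℕ => (fun _ : ℕ => Part.some c) n >>= (↑Nat.succ : ℕ →. ℕ) := by
      funext n; exact (Part.bind_some _ _).symm
    rw [h]
    exact .comp .succ ih

lemma pair_const (c : ℕ) : RecursiveInOracle O (fun m : ℕ => Part.some (Nat.pair c m)) := by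
  have h : (fun m : ℕ => Part.some (Nat.pair c m)) =
      fun m => Nat.pair <$> (fun _ : ℕ => Part.some c) m <*> (fun k : ℕ => Part.some k) m := by
    funext m; simp [Seq.seq]
  rw [h]
  exact .pair (.const c) .id

end RecursiveInOracle

def countableJoin (x : ℕ → TReal) : TReal := fun k => x k.unpair.1 k.unpair.2

lemma turingLE_countableJoin (x : ℕ → TReal) (n : ℕ) : TuringLE (x n) (countableJoin x) := by
  have h : charFn (x n) =
      fun m : ℕ => Part.some (Nat.pair n m) >>= charFn (countableJoin x) := by
    funext m
    exact ((Part.bind_some _ _).trans (by simp [charFn, countableJoin])).symm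
  unfold TuringLE
  rw [h]
  exact .comp .oracle (.pair_const n)

namespace TuringDegreeR

lemma exists_forall_le (g : ℕ → TuringDegreeR) : ∃ d, ∀ n, g n ≤ d :=
  ⟨deg (countableJoin fun n => (g n).out), fun n => by
    rw [← (g n).out_eq]
    exact turingLE_countableJoin _ n⟩

instance : IsDirectedOrder TuringDegreeR where
  directed a b := by
    obtain ⟨d, hd⟩ := exists_forall_le fun n => if n = 0 then a else b
    exact ⟨d, hd 0, hd 1⟩

end TuringDegreeR

namespace TD

lemma exists_forall_ge_eq_bool (td : TD) (p : TuringDegreeR → Bool) :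
    ∃ x, ∀ y, x ≤ y → p y = p x := by
  rcases td {y | p y = true} with ⟨x, hx⟩ | ⟨x, hx⟩
  · exact ⟨x, fun y hy => (hx hy).trans (hx (le_refl x)).symm⟩
  · refine ⟨x, fun y hy => ?_⟩
    simp only [Bool.eq_false_iff.mpr (hx hy), Bool.eq_false_iff.mpr (hx (le_refl x))]

lemma exists_forall_ge_eq (td : TD) (f : TuringDegreeR → TReal) :
    ∃ x, ∀ y, x ≤ y → f y = f x := by
  choose c hc using fun n => td.exists_forall_ge_eq_bool fun y => f y n
  obtain ⟨x, hx⟩ := TuringDegreeR.exists_forall_le c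
  refine ⟨x, fun y hy => funext fun n => ?_⟩
  rw [hc n y ((hx n).trans hy), hc n x (hx n)]

end TD

/-- Under TD, no almost increasing `Φ` admits an almost injective `f`. -/
theorem no_almost_injective (td : TD) (Φ : TuringDegreeR → TuringDegreeR)
    (hΦ : AlmostIncreasing Φ) (f : TuringDegreeR → TReal) :
    ¬ AlmostInjective Φ f := by
  rintro ⟨b, hb⟩
  obtain ⟨a, ha⟩ := hΦ
  obtain ⟨x, hx⟩ := td.exists_forall_ge_eq f
  obtain ⟨e, hae, hbe⟩ := exists_ge_ge a b
  obtain ⟨d, hed, hxd⟩ := exists_ge_ge e x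
  have hd : d < Φ d := ha d (hae.trans hed)
  exact hb d (hbe.trans hed) ((hx d hxd).trans (hx (Φ d) (hxd.trans hd.le)).symm)
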